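/- For the Borwein cubic theta functions and 0 < q < 1, one has 3 c(q³) = a(q) − b(q), where c(q) = ∑_{m,n∈ℤ} q^{(m+1/3)²+(m+1/3)(n+1/3)+(n+1/3)²}. -/

import Mathlib

open Real

set_option maxHeartbeats 1000000

/-- Borwein cubic theta function `a(q) = ∑_{m,n ∈ ℤ} q^(m²+mn+n²)`. -/
noncomputable def borweinA (q : ℝ) : ℝ :=
  ∑' p : ℤ × ℤ, q ^ ((p.1 : ℝ) ^ 2 + (p.1 : ℝ) * (p.2 : ℝ) + (p.2 : ℝ) ^ 2)

/-- Borwein cubic theta function `b(q) = ∑_{m,n ∈ ℤ} ζ^(n-m) q^(m²+mn+n²)`, `ζ = e^{2πi/3}`;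
the sum is real and equals the sum of the real parts `cos(2π(n-m)/3)`. -/
noncomputable def borweinB (q : ℝ) : ℝ :=
  ∑' p : ℤ × ℤ, Real.cos (2 * Real.pi * ((p.2 : ℝ) - (p.1 : ℝ)) / 3) *
    q ^ ((p.1 : ℝ) ^ 2 + (p.1 : ℝ) * (p.2 : ℝ) + (p.2 : ℝ) ^ 2)

/-- Borwein cubic theta function `c(q) = ∑_{m,n ∈ ℤ} q^((m+1/3)²+(m+1/3)(n+1/3)+(n+1/3)²)`. -/
noncomputable def borweinC (q : ℝ) : ℝ :=
  ∑' p : ℤ × ℤ, q ^ (((p.1 : ℝ) + 1 / 3) ^ 2 + ((p.1 : ℝ) + 1 / 3) * ((p.2 : ℝ) + 1 / 3) +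
    ((p.2 : ℝ) + 1 / 3) ^ 2)


/-- Summability of the basic quadratic-form theta series. -/
lemma borwein_summable_aux {q : ℝ} (hq0 : 0 < q) (hq1 : q < 1) :
    Summable (fun p : ℤ × ℤ =>
      q ^ ((p.1 : ℝ) ^ 2 + (p.1 : ℝ) * (p.2 : ℝ) + (p.2 : ℝ) ^ 2)) := by
  have hr0 : (0:ℝ) ≤ q ^ ((1:ℝ)/2) := Real.rpow_nonneg hq0.le _
  have hr1 : q ^ ((1:ℝ)/2) < 1 := Real.rpow_lt_one hq0.le hq1 (by norm_num)
  have hnat : Summable (fun n : ℕ => q ^ ((n : ℝ) ^ 2 / 2)) := by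
    refine Summable.of_nonneg_of_le (fun n => Real.rpow_nonneg hq0.le _) (fun n => ?_)
      (summable_geometric_of_lt_one hr0 hr1)
    have h1 : (q ^ ((1:ℝ)/2)) ^ n = q ^ ((n : ℝ) / 2) := by
      rw [← Real.rpow_natCast (q ^ ((1:ℝ)/2)) n, ← Real.rpow_mul hq0.le]
      ring_nf
    rw [h1]
    refine Real.rpow_le_rpow_of_exponent_ge hq0 hq1.le ?_
    have : (n : ℝ) ≤ (n : ℝ) ^ 2 := by
      have := Nat.le_self_pow (two_ne_zero) n
      exact_mod_cast this
    linarith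
  have h1 : Summable (fun m : ℤ => q ^ ((m : ℝ) ^ 2 / 2)) := by
    refine Summable.of_nat_of_neg ?_ ?_
    · exact hnat
    · convert hnat using 2 with n
      · rfl
      push_cast
      ring_nf
  have hprod : Summable (fun p : ℤ × ℤ =>
      q ^ ((p.1 : ℝ) ^ 2 / 2) * q ^ ((p.2 : ℝ) ^ 2 / 2)) :=
    h1.mul_of_nonneg h1 (fun m => Real.rpow_nonneg hq0.le _)
      (fun m => Real.rpow_nonneg hq0.le _)
  refine Summable.of_nonneg_of_le (fun p => Real.rpow_nonneg hq0.le _) (fun p => ?_) hprod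
  rw [← Real.rpow_add hq0]
  refine Real.rpow_le_rpow_of_exponent_ge hq0 hq1.le ?_
  nlinarith [sq_nonneg ((p.1 : ℝ) + (p.2 : ℝ))]

/-- The shift-negation equivalence on `ℤ × ℤ`. -/
def borweinNegEquiv : ℤ × ℤ ≃ ℤ × ℤ where
  toFun p := (-p.1 - 1, -p.2 - 1)
  invFun p := (-p.1 - 1, -p.2 - 1)
  left_inv p := by cases p; simp only [Prod.mk.injEq]; omega
  right_inv p := by cases p; simp only [Prod.mk.injEq]; omega

/-- The equivalence splitting `ℤ × ℤ` by the residue of `n - m` mod 3. -/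
def borweinModEquiv : ZMod 3 × (ℤ × ℤ) ≃ ℤ × ℤ where
  toFun x := (x.2.1 - x.2.2, x.2.1 + 2 * x.2.2 + (x.1.val : ℤ))
  invFun p := (((p.2 - p.1 : ℤ) : ZMod 3),
    (p.1 + (p.2 - p.1) / 3, (p.2 - p.1) / 3))
  left_inv := by
    rintro ⟨k, M, N⟩
    have hval : (k.val : ℤ) < 3 := by exact_mod_cast ZMod.val_lt k
    have hval0 : (0:ℤ) ≤ (k.val : ℤ) := Int.ofNat_nonneg _
    have hd : (M + 2 * N + (k.val : ℤ)) - (M - N) = (k.val : ℤ) + 3 * N := by ring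
    have hdiv : ((M + 2 * N + (k.val : ℤ)) - (M - N)) / 3 = N := by
      rw [hd, Int.add_mul_ediv_left _ N (by norm_num : (3:ℤ) ≠ 0),
        Int.ediv_eq_zero_of_lt hval0 hval, zero_add]
    have hcast : (((M + 2 * N + (k.val : ℤ)) - (M - N) : ℤ) : ZMod 3) = k := by
      rw [hd]
      push_cast
      rw [show ((3 : ZMod 3)) = 0 by decide]
      simp [ZMod.natCast_val, ZMod.cast_id]
    simp only [Prod.mk.injEq]
    refine ⟨hcast, ?_, ?_⟩ <;> rw [hdiv] <;> ring
  right_inv := by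
    rintro ⟨m, n⟩
    have hval : (((n - m : ℤ) : ZMod 3)).val = ((n - m) % 3 : ℤ) := by
      exact_mod_cast ZMod.val_intCast (n := 3) (n - m)
    have hmod := Int.mul_ediv_add_emod (n - m) 3
    simp only [Prod.mk.injEq]
    constructor
    · ring
    · rw [hval]; omega

theorem borwein_diff (q : ℝ) (hq0 : 0 < q) (hq1 : q < 1) :
    3 * borweinC (q ^ 3) = borweinA q - borweinB q := by
  have hq0' : (0:ℝ) ≤ q := hq0.le
  -- the quadratic form and the two summands
  set Q : ℤ × ℤ → ℝ :=
    fun p => (p.1 : ℝ) ^ 2 + (p.1 : ℝ) * (p.2 : ℝ) + (p.2 : ℝ) ^ 2 with hQdef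
  have hSa : Summable (fun p : ℤ × ℤ => q ^ Q p) := borwein_summable_aux hq0 hq1
  have hSb : Summable (fun p : ℤ × ℤ =>
      Real.cos (2 * π * ((p.2 : ℝ) - (p.1 : ℝ)) / 3) * q ^ Q p) := by
    refine Summable.of_norm_bounded hSa (fun p => ?_)
    rw [Real.norm_eq_abs, abs_mul,
      abs_of_pos (Real.rpow_pos_of_pos hq0 _)]
    calc |Real.cos (2 * π * ((p.2 : ℝ) - (p.1 : ℝ)) / 3)| * q ^ Q p
        ≤ 1 * q ^ Q p := by
          exact mul_le_mul_of_nonneg_right (Real.abs_cos_le_one _)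
            (Real.rpow_pos_of_pos hq0 _).le
      _ = q ^ Q p := one_mul _
  -- F is the summand of a − b
  set F : ℤ × ℤ → ℝ :=
    fun p => (1 - Real.cos (2 * π * ((p.2 : ℝ) - (p.1 : ℝ)) / 3)) * q ^ Q p with hFdef
  have hSF : Summable F := by
    have h := hSa.sub hSb
    convert h using 2 with p
    · rfl
    ring
  have hab : borweinA q - borweinB q = ∑' p, F p := by
    rw [borweinA, borweinB, ← Summable.tsum_sub hSa hSb]
    exact (tsum_congr fun p => by rw [hFdef]; ring).symm
  -- split the sum via the mod-3 equivalence
  have hEsum : Summable (fun x : ZMod 3 × (ℤ × ℤ) => F (borweinModEquiv x)) :=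
    borweinModEquiv.summable_iff.2 hSF
  have hsplit : ∑' p, F p =
      ∑' (k : ZMod 3), ∑' (p : ℤ × ℤ), F (borweinModEquiv (k, p)) := by
    rw [← borweinModEquiv.tsum_eq F]
    exact Summable.tsum_prod' hEsum hEsum.prod_factor
  -- the c-series integrand
  set G : ℤ × ℤ → ℝ := fun p =>
    (q ^ 3) ^ (((p.1 : ℝ) + 1 / 3) ^ 2 +
      ((p.1 : ℝ) + 1 / 3) * ((p.2 : ℝ) + 1 / 3) + ((p.2 : ℝ) + 1 / 3) ^ 2) with hGdef
  have hq3 : ∀ e : ℝ, (q ^ 3) ^ e = q ^ (3 * e) := by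
    intro e
    rw [← Real.rpow_natCast q 3, ← Real.rpow_mul hq0']
    norm_num
  -- k = 0 slice vanishes
  have h0 : ∑' (p : ℤ × ℤ), F (borweinModEquiv ((0 : ZMod 3), p)) = 0 := by
    have hz : ∀ p : ℤ × ℤ, F (borweinModEquiv ((0 : ZMod 3), p)) = 0 := by
      rintro ⟨M, N⟩
      have hv : ((0 : ZMod 3).val : ℤ) = 0 := by decide
      simp only [hFdef, borweinModEquiv, Equiv.coe_fn_mk, hv]
      have harg : 2 * π * (((M + 2 * N + 0 : ℤ) : ℝ) - ((M - N : ℤ) : ℝ)) / 3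
          = (N : ℝ) * (2 * π) := by push_cast; ring
      rw [harg, Real.cos_int_mul_two_pi, sub_self, zero_mul]
    rw [tsum_congr hz, tsum_zero]
  -- k = 1 slice
  have h1 : ∑' (p : ℤ × ℤ), F (borweinModEquiv ((1 : ZMod 3), p))
      = (3 / 2) * ∑' p, G p := by
    rw [← tsum_mul_left]
    refine tsum_congr ?_
    rintro ⟨M, N⟩
    have hv : ((1 : ZMod 3).val : ℤ) = 1 := by decide
    simp only [hFdef, borweinModEquiv, Equiv.coe_fn_mk, hv, hGdef]
    have harg : 2 * π * (((M + 2 * N + 1 : ℤ) : ℝ) - ((M - N : ℤ) : ℝ)) / 3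
        = 2 * π / 3 + (N : ℝ) * (2 * π) := by push_cast; ring
    have hcos : Real.cos (2 * π / 3 + (N : ℝ) * (2 * π)) = -(1/2) := by
      rw [Real.cos_add_int_mul_two_pi,
        show (2 * π / 3 : ℝ) = π - π / 3 by ring, Real.cos_pi_sub,
        Real.cos_pi_div_three]
    rw [harg, hcos, hq3]
    have hexp : Q ((M - N : ℤ), (M + 2 * N + 1 : ℤ)) =
        3 * (((M : ℝ) + 1 / 3) ^ 2 + ((M : ℝ) + 1 / 3) * ((N : ℝ) + 1 / 3) +
          ((N : ℝ) + 1 / 3) ^ 2) := by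
      simp only [hQdef]
      push_cast
      ring
    rw [hexp]
    norm_num
  -- k = 2 slice
  have h2 : ∑' (p : ℤ × ℤ), F (borweinModEquiv ((2 : ZMod 3), p))
      = (3 / 2) * ∑' p, G p := by
    rw [← borweinNegEquiv.tsum_eq G, ← tsum_mul_left]
    refine tsum_congr ?_
    rintro ⟨M, N⟩
    have hv : ((2 : ZMod 3).val : ℤ) = 2 := by decide
    simp only [hFdef, borweinModEquiv, borweinNegEquiv, Equiv.coe_fn_mk, hv, hGdef]
    have harg : 2 * π * (((M + 2 * N + 2 : ℤ) : ℝ) - ((M - N : ℤ) : ℝ)) / 3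
        = -(2 * π / 3) + ((N + 1 : ℤ) : ℝ) * (2 * π) := by push_cast; ring
    have hcos : Real.cos (-(2 * π / 3) + ((N + 1 : ℤ) : ℝ) * (2 * π)) = -(1/2) := by
      rw [Real.cos_add_int_mul_two_pi, Real.cos_neg,
        show (2 * π / 3 : ℝ) = π - π / 3 by ring, Real.cos_pi_sub,
        Real.cos_pi_div_three]
    rw [harg, hcos, hq3]
    have hexp : Q ((M - N : ℤ), (M + 2 * N + 2 : ℤ)) =
        3 * ((((-M - 1 : ℤ) : ℝ) + 1 / 3) ^ 2 +
          (((-M - 1 : ℤ) : ℝ) + 1 / 3) * (((-N - 1 : ℤ) : ℝ) + 1 / 3) +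
          (((-N - 1 : ℤ) : ℝ) + 1 / 3) ^ 2) := by
      simp only [hQdef]
      push_cast
      ring
    rw [hexp]
    norm_num
  -- assemble
  have hsum3 : ∑' p, F p = 3 * ∑' p, G p := by
    have hexp3 : ∀ f : ZMod 3 → ℝ, ∑ b : ZMod 3, f b = f 0 + f 1 + f 2 := by
      intro f
      exact Fin.sum_univ_three f
    rw [hsplit, tsum_fintype, hexp3, h0, h1, h2]
    ring
  rw [hab, hsum3, borweinC]
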